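/- In Mat₂(q) the quantum determinant det_q = Z11·Z22 − Z12·Z21 satisfies: det_q = Z22·Z11 − q·Z12·Z21, det_q·Z11 = Z11·det_q, det_q·Z12 = q·Z12·det_q, q·(det_q·Z21) = Z21·det_q, and det_q·Z22 = Z22·det_q. In particular det_q is a normal element of Mat₂(q), i.e. det_q·Mat₂(q) = Mat₂(q)·det_q. -/
import Mathlib


noncomputable section

open FreeAlgebra MulOpposite

/-- The relations of the Dipper–Donkin quantized matrix algebra of rank 2:
`Z12·Z11 = Z11·Z12`, `Z21·Z11 = q·Z11·Z21`, `Z22·Z21 = Z21·Z22`, `Z22·Z12 = q·Z12·Z22`,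
`Z21·Z12 = q·Z12·Z21`, `Z22·Z11 = Z11·Z22 + (q−1)·Z12·Z21`, where the generators
`Z11, Z12, Z21, Z22` are the images of `0, 1, 2, 3 : Fin 4`. -/
inductive DDrel {K : Type*} [Field K] (q : K) :
    FreeAlgebra K (Fin 4) → FreeAlgebra K (Fin 4) → Prop
  | r1 : DDrel q (ι K (1 : Fin 4) * ι K (0 : Fin 4)) (ι K (0 : Fin 4) * ι K (1 : Fin 4))
  | r2 : DDrel q (ι K (2 : Fin 4) * ι K (0 : Fin 4)) (q • (ι K (0 : Fin 4) * ι K (2 : Fin 4)))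
  | r3 : DDrel q (ι K (3 : Fin 4) * ι K (2 : Fin 4)) (ι K (2 : Fin 4) * ι K (3 : Fin 4))
  | r4 : DDrel q (ι K (3 : Fin 4) * ι K (1 : Fin 4)) (q • (ι K (1 : Fin 4) * ι K (3 : Fin 4)))
  | r5 : DDrel q (ι K (2 : Fin 4) * ι K (1 : Fin 4)) (q • (ι K (1 : Fin 4) * ι K (2 : Fin 4)))
  | r6 : DDrel q (ι K (3 : Fin 4) * ι K (0 : Fin 4))
      (ι K (0 : Fin 4) * ι K (3 : Fin 4) + (q - 1) • (ι K (1 : Fin 4) * ι K (2 : Fin 4)))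

/-- The Dipper–Donkin quantized matrix algebra `Mat₂(q)`: the quotient of the free
`K`-algebra on four generators by the two-sided ideal generated by the relations above. -/
abbrev DDMat2 {K : Type*} [Field K] (q : K) := RingQuot (DDrel q)

variable {K : Type*} [Field K]

/-- The generator `Z11` of `Mat₂(q)`. -/
def Z11 (q : K) : DDMat2 q := RingQuot.mkAlgHom K (DDrel q) (ι K (0 : Fin 4))
/-- The generator `Z12` of `Mat₂(q)`. -/
def Z12 (q : K) : DDMat2 q := RingQuot.mkAlgHom K (DDrel q) (ι K (1 : Fin 4))
/-- The generator `Z21` of `Mat₂(q)`. -/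
def Z21 (q : K) : DDMat2 q := RingQuot.mkAlgHom K (DDrel q) (ι K (2 : Fin 4))
/-- The generator `Z22` of `Mat₂(q)`. -/
def Z22 (q : K) : DDMat2 q := RingQuot.mkAlgHom K (DDrel q) (ι K (3 : Fin 4))

section
variable (q : K)

lemma rel1 : Z12 q * Z11 q = Z11 q * Z12 q := by
  simpa [Z11, Z12, map_mul] using RingQuot.mkAlgHom_rel K (DDrel.r1 (q := q))

lemma rel2 : Z21 q * Z11 q = q • (Z11 q * Z21 q) := by
  simpa [Z11, Z21, map_mul, map_smul] using RingQuot.mkAlgHom_rel K (DDrel.r2 (q := q))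

lemma rel3 : Z22 q * Z21 q = Z21 q * Z22 q := by
  simpa [Z21, Z22, map_mul] using RingQuot.mkAlgHom_rel K (DDrel.r3 (q := q))

lemma rel4 : Z22 q * Z12 q = q • (Z12 q * Z22 q) := by
  simpa [Z12, Z22, map_mul, map_smul] using RingQuot.mkAlgHom_rel K (DDrel.r4 (q := q))

lemma rel5 : Z21 q * Z12 q = q • (Z12 q * Z21 q) := by
  simpa [Z12, Z21, map_mul, map_smul] using RingQuot.mkAlgHom_rel K (DDrel.r5 (q := q))

lemma rel6 : Z22 q * Z11 q = Z11 q * Z22 q + (q - 1) • (Z12 q * Z21 q) := by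
  simpa [Z11, Z12, Z21, Z22, map_mul, map_smul, map_add] using
    RingQuot.mkAlgHom_rel K (DDrel.r6 (q := q))

lemma part1 : Z11 q * Z22 q - Z12 q * Z21 q = Z22 q * Z11 q - q • (Z12 q * Z21 q) := by
  rw [rel6]; module

lemma part2 : (Z11 q * Z22 q - Z12 q * Z21 q) * Z11 q
    = Z11 q * (Z11 q * Z22 q - Z12 q * Z21 q) := by
  have h : Z12 q * (Z11 q * Z21 q) = Z11 q * (Z12 q * Z21 q) := by
    rw [← mul_assoc, rel1, mul_assoc]
  calc (Z11 q * Z22 q - Z12 q * Z21 q) * Z11 q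
      = Z11 q * (Z22 q * Z11 q) - Z12 q * (Z21 q * Z11 q) := by noncomm_ring; simp only [smul_mul_assoc, mul_smul_comm, mul_assoc]
    _ = Z11 q * (Z11 q * Z22 q + (q - 1) • (Z12 q * Z21 q))
        - Z12 q * (q • (Z11 q * Z21 q)) := by rw [rel6, rel2]
    _ = Z11 q * (Z11 q * Z22 q) + (q - 1) • (Z11 q * (Z12 q * Z21 q))
        - q • (Z11 q * (Z12 q * Z21 q)) := by rw [mul_add, mul_smul_comm, mul_smul_comm, h]
    _ = Z11 q * (Z11 q * Z22 q - Z12 q * Z21 q) := by rw [mul_sub]; module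

lemma part3 : (Z11 q * Z22 q - Z12 q * Z21 q) * Z12 q
    = q • (Z12 q * (Z11 q * Z22 q - Z12 q * Z21 q)) := by
  have h : Z11 q * (Z12 q * Z22 q) = Z12 q * (Z11 q * Z22 q) := by
    rw [← mul_assoc, ← rel1, mul_assoc]
  calc (Z11 q * Z22 q - Z12 q * Z21 q) * Z12 q
      = Z11 q * (Z22 q * Z12 q) - Z12 q * (Z21 q * Z12 q) := by noncomm_ring; simp only [smul_mul_assoc, mul_smul_comm, mul_assoc]
    _ = Z11 q * (q • (Z12 q * Z22 q)) - Z12 q * (q • (Z12 q * Z21 q)) := by rw [rel4, rel5]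
    _ = q • (Z12 q * (Z11 q * Z22 q)) - q • (Z12 q * (Z12 q * Z21 q)) := by
        rw [mul_smul_comm, mul_smul_comm, h]
    _ = q • (Z12 q * (Z11 q * Z22 q - Z12 q * Z21 q)) := by rw [mul_sub]; module

lemma part4 : q • ((Z11 q * Z22 q - Z12 q * Z21 q) * Z21 q)
    = Z21 q * (Z11 q * Z22 q - Z12 q * Z21 q) := by
  calc q • ((Z11 q * Z22 q - Z12 q * Z21 q) * Z21 q)
      = q • (Z11 q * (Z22 q * Z21 q)) - q • (Z12 q * (Z21 q * Z21 q)) := by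
        rw [sub_mul, mul_assoc, mul_assoc, smul_sub]
    _ = q • (Z11 q * (Z21 q * Z22 q)) - q • (Z12 q * (Z21 q * Z21 q)) := by rw [rel3]
    _ = (q • (Z11 q * Z21 q)) * Z22 q - (q • (Z12 q * Z21 q)) * Z21 q := by
        rw [smul_mul_assoc, smul_mul_assoc, mul_assoc, mul_assoc]
    _ = (Z21 q * Z11 q) * Z22 q - (Z21 q * Z12 q) * Z21 q := by rw [rel2, rel5]
    _ = Z21 q * (Z11 q * Z22 q - Z12 q * Z21 q) := by noncomm_ring; simp only [smul_mul_assoc, mul_smul_comm, mul_assoc]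

lemma part5 : (Z11 q * Z22 q - Z12 q * Z21 q) * Z22 q
    = Z22 q * (Z11 q * Z22 q - Z12 q * Z21 q) := by
  calc (Z11 q * Z22 q - Z12 q * Z21 q) * Z22 q
      = Z11 q * (Z22 q * Z22 q) - Z12 q * (Z21 q * Z22 q) := by noncomm_ring; simp only [smul_mul_assoc, mul_smul_comm, mul_assoc]
    _ = Z11 q * (Z22 q * Z22 q) + (q - 1) • (Z12 q * (Z21 q * Z22 q))
        - q • (Z12 q * (Z21 q * Z22 q)) := by module
    _ = (Z11 q * Z22 q + (q - 1) • (Z12 q * Z21 q)) * Z22 q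
        - (q • (Z12 q * Z22 q)) * Z21 q := by
        rw [add_mul, smul_mul_assoc, smul_mul_assoc, mul_assoc, mul_assoc, mul_assoc, ← rel3]
    _ = (Z22 q * Z11 q) * Z22 q - (Z22 q * Z12 q) * Z21 q := by rw [rel6, rel4]
    _ = Z22 q * (Z11 q * Z22 q - Z12 q * Z21 q) := by noncomm_ring; simp only [smul_mul_assoc, mul_smul_comm, mul_assoc]

lemma normal_right (hq : q ≠ 0) (x : DDMat2 q) :
    ∃ y, (Z11 q * Z22 q - Z12 q * Z21 q) * x = y * (Z11 q * Z22 q - Z12 q * Z21 q) := by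
  obtain ⟨z, rfl⟩ := RingQuot.mkAlgHom_surjective K (DDrel q) x
  induction z using FreeAlgebra.induction with
  | grade0 r =>
      exact ⟨algebraMap K _ r, by rw [AlgHom.commutes]; exact (Algebra.commutes r _).symm⟩
  | grade1 i =>
      fin_cases i
      · exact ⟨Z11 q, part2 q⟩
      · exact ⟨q • Z12 q, by rw [smul_mul_assoc]; exact part3 q⟩
      · refine ⟨q⁻¹ • Z21 q, ?_⟩
        show (Z11 q * Z22 q - Z12 q * Z21 q) * Z21 q = _
        rw [smul_mul_assoc, ← part4 q, smul_smul, inv_mul_cancel₀ hq, one_smul]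
      · exact ⟨Z22 q, part5 q⟩
  | mul z₁ z₂ h₁ h₂ =>
      obtain ⟨y₁, h₁⟩ := h₁; obtain ⟨y₂, h₂⟩ := h₂
      exact ⟨y₁ * y₂, by rw [map_mul, ← mul_assoc, h₁, mul_assoc, h₂, ← mul_assoc]⟩
  | add z₁ z₂ h₁ h₂ =>
      obtain ⟨y₁, h₁⟩ := h₁; obtain ⟨y₂, h₂⟩ := h₂
      exact ⟨y₁ + y₂, by rw [map_add, mul_add, h₁, h₂, add_mul]⟩

lemma normal_left (hq : q ≠ 0) (x : DDMat2 q) :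
    ∃ y, x * (Z11 q * Z22 q - Z12 q * Z21 q) = (Z11 q * Z22 q - Z12 q * Z21 q) * y := by
  obtain ⟨z, rfl⟩ := RingQuot.mkAlgHom_surjective K (DDrel q) x
  induction z using FreeAlgebra.induction with
  | grade0 r =>
      exact ⟨algebraMap K _ r, by rw [AlgHom.commutes]; exact Algebra.commutes r _⟩
  | grade1 i =>
      fin_cases i
      · exact ⟨Z11 q, (part2 q).symm⟩
      · refine ⟨q⁻¹ • Z12 q, ?_⟩
        show Z12 q * (Z11 q * Z22 q - Z12 q * Z21 q) = _
        rw [mul_smul_comm, part3 q, smul_smul, inv_mul_cancel₀ hq, one_smul]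
      · refine ⟨q • Z21 q, ?_⟩
        show Z21 q * (Z11 q * Z22 q - Z12 q * Z21 q) = _
        rw [mul_smul_comm, ← part4 q]
      · exact ⟨Z22 q, (part5 q).symm⟩
  | mul z₁ z₂ h₁ h₂ =>
      obtain ⟨y₁, h₁⟩ := h₁; obtain ⟨y₂, h₂⟩ := h₂
      exact ⟨y₁ * y₂, by rw [map_mul, mul_assoc, h₂, ← mul_assoc, h₁, mul_assoc]⟩
  | add z₁ z₂ h₁ h₂ =>
      obtain ⟨y₁, h₁⟩ := h₁; obtain ⟨y₂, h₂⟩ := h₂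
      exact ⟨y₁ + y₂, by rw [map_add, add_mul, h₁, h₂, mul_add]⟩

end

/-- In `Mat₂(q)` the quantum determinant `det_q = Z11·Z22 − Z12·Z21`
satisfies `det_q = Z22·Z11 − q·Z12·Z21`, commutes with `Z11` and `Z22`,
`q`-commutes with `Z12` and `Z21`, and is a normal element, i.e.
`det_q · Mat₂(q) = Mat₂(q) · det_q`. -/
theorem DDMat2_detq_relations_and_normal (q : K) (hq : q ≠ 0) :
    Z11 q * Z22 q - Z12 q * Z21 q = Z22 q * Z11 q - q • (Z12 q * Z21 q) ∧
    (Z11 q * Z22 q - Z12 q * Z21 q) * Z11 q = Z11 q * (Z11 q * Z22 q - Z12 q * Z21 q) ∧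
    (Z11 q * Z22 q - Z12 q * Z21 q) * Z12 q = q • (Z12 q * (Z11 q * Z22 q - Z12 q * Z21 q)) ∧
    q • ((Z11 q * Z22 q - Z12 q * Z21 q) * Z21 q) = Z21 q * (Z11 q * Z22 q - Z12 q * Z21 q) ∧
    (Z11 q * Z22 q - Z12 q * Z21 q) * Z22 q = Z22 q * (Z11 q * Z22 q - Z12 q * Z21 q) ∧
    Set.range (fun a : DDMat2 q => (Z11 q * Z22 q - Z12 q * Z21 q) * a) =
      Set.range (fun a : DDMat2 q => a * (Z11 q * Z22 q - Z12 q * Z21 q)) := by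
  refine ⟨part1 q, part2 q, part3 q, part4 q, part5 q, ?_⟩
  ext x
  constructor
  · rintro ⟨a, rfl⟩
    obtain ⟨y, hy⟩ := normal_right q hq a
    exact ⟨y, hy.symm⟩
  · rintro ⟨a, rfl⟩
    obtain ⟨y, hy⟩ := normal_left q hq a
    exact ⟨y, hy.symm⟩
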